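/- Let n ≥ 1, let a_1,…,a_n be integers, and let P be a natural number with P + a_j ≥ 0 for all 1 ≤ j ≤ n. If S = {i_1 < i_2 < ⋯ < i_k} ⊆ {1,…,n} is a nonempty subset with a_{i_1} + ⋯ + a_{i_k} = 0, then the sequence 0 < i_1 < ⋯ < i_k < n+1 is a directed path from s = 0 to t = n+1 in G'_A of total weight exactly K = (n+1)P. -/

import Mathlib

/-! The weight along a path telescopes: the `P`-parts of the arcs add up to `(n+1)·P` as soon as
the path avoids the arc `(0, n+1)`, and what is left is the sum of `a` over the interior vertices. -/

/-- Weight function of the DAG `G'_A` on vertices `0, 1, …, n+1` (a linear order):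
`w i j = (j-i)·P + a j` for `0 ≤ i < j ≤ n`, `w i (n+1) = (n+1-i)·P` for
`1 ≤ i ≤ n`, and `w 0 (n+1) = (n+1)·P + 1`. -/
def gaWeight' (n : ℕ) (a : ℕ → ℤ) (P : ℕ) (i j : ℕ) : ℤ :=
  if j ≤ n then ((j : ℤ) - (i : ℤ)) * (P : ℤ) + a j
  else if i = 0 then ((n : ℤ) + 1) * (P : ℤ) + 1
  else ((n : ℤ) + 1 - (i : ℤ)) * (P : ℤ)

/-- The vertex sequence `s, i₁, …, i_k, t`, where `i₁ < ⋯ < i_k` enumerate `S`; from index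
`k + 1 = S.card + 1` on it is constantly `t`. -/
def framedPath (s t : ℕ) (S : Finset ℕ) : ℕ → ℕ
  | 0 => s
  | r + 1 => if h : r < S.card then S.orderEmbOfFin rfl ⟨r, h⟩ else t

namespace framedPath

variable {s t : ℕ} {S : Finset ℕ}

@[simp]
lemma card_succ : framedPath s t S (S.card + 1) = t := by
  simp [framedPath]

lemma succ_of_lt {r : ℕ} (hr : r < S.card) :
    framedPath s t S (r + 1) = S.orderEmbOfFin rfl ⟨r, hr⟩ := by
  simp [framedPath, hr]

lemma succ_mem {r : ℕ} (hr : r < S.card) : framedPath s t S (r + 1) ∈ S := by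
  rw [succ_of_lt hr]
  exact S.orderEmbOfFin_mem rfl _

lemma lt_succ (hS : S ⊆ Finset.Ioo s t) (hst : s < t) {r : ℕ} (hr : r < S.card + 1) :
    framedPath s t S r < framedPath s t S (r + 1) := by
  have hmem : ∀ {j}, j ∈ S → s < j ∧ j < t := fun hj => Finset.mem_Ioo.mp (hS hj)
  rcases r with _ | r
  · by_cases h0 : 0 < S.card
    · exact (hmem (succ_mem h0)).1
    · simpa [framedPath, h0] using hst
  · have hr : r < S.card := by omega
    by_cases hr' : r + 1 < S.card
    · rw [succ_of_lt hr, succ_of_lt hr']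
      exact (S.orderEmbOfFin rfl).strictMono (Fin.mk_lt_mk.mpr r.lt_succ_self)
    · have hlast : r + 1 = S.card := by omega
      rw [hlast, card_succ, ← hlast]
      exact (hmem (succ_mem hr)).2

lemma image_Icc : (Finset.Icc 1 S.card).image (framedPath s t S) = S := by
  ext m
  simp only [Finset.mem_image, Finset.mem_Icc]
  constructor
  · rintro ⟨_ | r, ⟨hr1, hrk⟩, rfl⟩
    · omega
    · exact succ_mem (by omega)
  · intro hm
    obtain ⟨i, rfl⟩ : m ∈ Set.range (S.orderEmbOfFin rfl) := by
      rwa [Finset.range_orderEmbOfFin]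
    exact ⟨i + 1, ⟨by omega, by omega⟩, succ_of_lt i.isLt⟩

lemma sum_succ {M : Type*} [AddCommMonoid M] (g : ℕ → M) :
    ∑ r ∈ Finset.range S.card, g (framedPath s t S (r + 1)) = ∑ j ∈ S, g j := by
  conv_rhs => rw [← S.map_orderEmbOfFin_univ rfl, Finset.sum_map]
  rw [← Fin.sum_univ_eq_sum_range]
  exact Finset.sum_congr rfl fun i _ => by rw [succ_of_lt i.isLt]; rfl

end framedPath

section gaWeight'

variable {n : ℕ} {a : ℕ → ℤ} {P : ℕ}

lemma gaWeight'_of_le {i j : ℕ} (hj : j ≤ n) :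
    gaWeight' n a P i j = ((j : ℤ) - i) * P + a j := if_pos hj

lemma gaWeight'_succ_of_ne_zero {i : ℕ} (hi : i ≠ 0) :
    gaWeight' n a P i (n + 1) = ((n : ℤ) + 1 - i) * P := by
  simp [gaWeight', hi]

lemma sum_gaWeight'_path (x : ℕ → ℕ) {k : ℕ} (h0 : x 0 = 0) (hlast : x (k + 1) = n + 1)
    (hk : x k ≠ 0) (hinner : ∀ r < k, x (r + 1) ≤ n) :
    ∑ r ∈ Finset.range (k + 1), gaWeight' n a P (x r) (x (r + 1)) =
      ((n : ℤ) + 1) * P + ∑ r ∈ Finset.range k, a (x (r + 1)) := by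
  have hsteps : ∀ r ∈ Finset.range k, gaWeight' n a P (x r) (x (r + 1)) =
      ((x (r + 1) : ℤ) - x r) * P + a (x (r + 1)) :=
    fun r hr => gaWeight'_of_le (hinner r (Finset.mem_range.mp hr))
  rw [Finset.sum_range_succ, Finset.sum_congr rfl hsteps, Finset.sum_add_distrib,
    ← Finset.sum_mul, Finset.sum_range_sub (fun r => (x r : ℤ)), hlast,
    gaWeight'_succ_of_ne_zero hk, h0]
  push_cast
  ring

end gaWeight'

theorem subsetSum_to_kWeightedPath_general (n : ℕ) (a : ℕ → ℤ) (P : ℕ)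
    (S : Finset ℕ) (hSne : S.Nonempty) (hSsub : S ⊆ Finset.Icc 1 n)
    (hSsum : ∑ j ∈ S, a j = 0) :
    ∃ x : ℕ → ℕ, x 0 = 0 ∧ x (S.card + 1) = n + 1 ∧
      (∀ r, r < S.card + 1 → x r < x (r + 1)) ∧
      Finset.image x (Finset.Icc 1 S.card) = S ∧
      ∑ r ∈ Finset.range (S.card + 1), gaWeight' n a P (x r) (x (r + 1)) =
        ((n : ℤ) + 1) * (P : ℤ) := by
  have hmem : ∀ {j}, j ∈ S → 1 ≤ j ∧ j ≤ n := fun hj => Finset.mem_Icc.mp (hSsub hj)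
  have hSIoo : S ⊆ Finset.Ioo 0 (n + 1) := fun j hj => by
    have := hmem hj
    rw [Finset.mem_Ioo]
    omega
  have hlast : framedPath 0 (n + 1) S S.card ≠ 0 := by
    obtain ⟨k, hk⟩ : ∃ k, S.card = k + 1 := Nat.exists_eq_succ_of_ne_zero hSne.card_pos.ne'
    rw [hk]
    exact Nat.one_le_iff_ne_zero.mp (hmem (framedPath.succ_mem (by omega))).1
  refine ⟨framedPath 0 (n + 1) S, rfl, framedPath.card_succ,
    fun r hr => framedPath.lt_succ hSIoo n.succ_pos hr, framedPath.image_Icc, ?_⟩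
  rw [sum_gaWeight'_path _ rfl framedPath.card_succ hlast
    (fun r hr => (hmem (framedPath.succ_mem hr)).2), framedPath.sum_succ, hSsum, add_zero]

/-- If `S = {i₁ < ⋯ < i_k} ⊆ {1,…,n}` is nonempty with `∑_{j ∈ S} a j = 0`, then
the sequence `0 < i₁ < ⋯ < i_k < n+1` is a directed path from `s = 0` to
`t = n+1` in `G'_A` of total weight exactly `K = (n+1)·P`. -/
theorem subsetSum_to_kWeightedPath (n : ℕ) (hn : 1 ≤ n) (a : ℕ → ℤ) (P : ℕ)
    (hP : ∀ j, 1 ≤ j → j ≤ n → 0 ≤ (P : ℤ) + a j)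
    (S : Finset ℕ) (hSne : S.Nonempty) (hSsub : S ⊆ Finset.Icc 1 n)
    (hSsum : ∑ j ∈ S, a j = 0) :
    ∃ x : ℕ → ℕ, x 0 = 0 ∧ x (S.card + 1) = n + 1 ∧
      (∀ r, r < S.card + 1 → x r < x (r + 1)) ∧
      Finset.image x (Finset.Icc 1 S.card) = S ∧
      ∑ r ∈ Finset.range (S.card + 1), gaWeight' n a P (x r) (x (r + 1)) =
        ((n : ℤ) + 1) * (P : ℤ) :=
  subsetSum_to_kWeightedPath_general n a P S hSne hSsub hSsum
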